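/- arXiv:2003.03127 — 2 statements merged into one kernel-verified Lean document; each statement's English description precedes it below -/
import Mathlib

section
/- Let x : Ī → ℝ² be a C² curve with |x_ρ| > 0, τ = x_ρ/|x_ρ|, ν = −τ^⊥, and curvature κ satisfying τ_ρ = κ |x_ρ| ν. Let ρ₀ ∈ ∂I be a boundary point with x(ρ₀)·e₁ = 0, x_ρ(ρ₀)·e₂ = 0 (so that ν(ρ₀)·e₁ = 0 and x_ρ(ρ₀)·e₁ ≠ 0), and suppose x(ρ)·e₁ ≠ 0 for ρ ≠ ρ₀ near ρ₀. Then lim_{ρ→ρ₀} (ν(ρ)·e₁)/(x(ρ)·e₁) = −κ(ρ₀). -/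
/-! Near the axis both `ν·e₁` and `x·e₁` vanish at `ρ₀`, so the limit of their quotient is the
quotient of their derivatives there. The Frenet equation gives `(ν·e₁)' = -(τ·e₂)' = -κ |x_ρ| ν·e₂
= -κ |x_ρ| τ·e₁ = -κ x_ρ·e₁`, while `(x·e₁)' = x_ρ·e₁`, which is nonzero by the contact condition. -/

open Real Filter

/-- Clockwise rotation by π/2 in ℝ²: `(a,b)^⊥ = (b,−a)`. -/
noncomputable def perp (v : EuclideanSpace ℝ (Fin 2)) : EuclideanSpace ℝ (Fin 2) :=
  WithLp.toLp 2 ![v 1, -v 0]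

@[simp]
theorem perp_apply_zero (v : EuclideanSpace ℝ (Fin 2)) : perp v 0 = v 1 := rfl

@[simp]
theorem perp_apply_one (v : EuclideanSpace ℝ (Fin 2)) : perp v 1 = -v 0 := rfl

theorem HasDerivWithinAt.piLp_apply {ι : Type*} [Fintype ι] {p : ENNReal} [Fact (1 ≤ p)]
    {f : ℝ → PiLp p (fun _ : ι => ℝ)} {f' : PiLp p (fun _ : ι => ℝ)} {s : Set ℝ} {a : ℝ}
    (hf : HasDerivWithinAt f f' s a) (i : ι) :
    HasDerivWithinAt (fun t => f t i) (f' i) s a :=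
  (PiLp.hasFDerivAt_apply (p := p) (f a) i).comp_hasDerivWithinAt a hf

theorem EuclideanSpace.apply_zero_ne_zero_of_apply_one_eq_zero {v : EuclideanSpace ℝ (Fin 2)}
    (hv : v ≠ 0) (h1 : v 1 = 0) : v 0 ≠ 0 := by
  contrapose! hv
  ext i
  fin_cases i <;> simp [hv, h1]

theorem tendsto_div_of_hasDerivWithinAt_of_eq_zero {𝕜 : Type*} [NontriviallyNormedField 𝕜]
    {f g : 𝕜 → 𝕜} {f' g' a : 𝕜} {s : Set 𝕜} (hf : HasDerivWithinAt f f' s a)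
    (hg : HasDerivWithinAt g g' s a) (hfa : f a = 0) (hga : g a = 0) (hg' : g' ≠ 0) :
    Tendsto (fun t => f t / g t) (nhdsWithin a (s \ {a})) (nhds (f' / g')) := by
  refine ((hasDerivWithinAt_iff_tendsto_slope.mp hf).div
    (hasDerivWithinAt_iff_tendsto_slope.mp hg) hg').congr' ?_
  filter_upwards [self_mem_nhdsWithin] with t ht
  simp only [Pi.div_apply, slope_def_field, hfa, hga, sub_zero]
  exact div_div_div_cancel_right₀ (sub_ne_zero.mpr ht.2) _ _

theorem stmt_4_general
    (I : Set ℝ) (ρ₀ : ℝ) (hρ₀I : ρ₀ ∈ I)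
    (x x' τ ν : ℝ → EuclideanSpace ℝ (Fin 2)) (κ : ℝ → ℝ)
    (hx : ∀ ρ ∈ I, HasDerivWithinAt x (x' ρ) I ρ)
    (hpos : ∀ ρ ∈ I, 0 < ‖x' ρ‖)
    (hτ : ∀ ρ, τ ρ = ‖x' ρ‖⁻¹ • x' ρ)
    (hν : ∀ ρ, ν ρ = -perp (τ ρ))
    (hFrenet : ∀ ρ ∈ I, HasDerivWithinAt τ ((κ ρ * ‖x' ρ‖) • ν ρ) I ρ)
    (haxis : x ρ₀ 0 = 0)
    (hcontact : x' ρ₀ 1 = 0) :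
    Tendsto (fun ρ => ν ρ 0 / x ρ 0) (nhdsWithin ρ₀ (I \ {ρ₀}))
      (nhds (-(κ ρ₀))) := by
  have hspeed : ‖x' ρ₀‖ ≠ 0 := (hpos ρ₀ hρ₀I).ne'
  have hx'0 : x' ρ₀ 0 ≠ 0 :=
    EuclideanSpace.apply_zero_ne_zero_of_apply_one_eq_zero (norm_ne_zero_iff.mp hspeed) hcontact
  have hν0 : (fun ρ => ν ρ 0) = fun ρ => -τ ρ 1 := by
    ext ρ
    simp [hν ρ]
  have hνderiv : HasDerivWithinAt (fun ρ => ν ρ 0) (-(κ ρ₀ * x' ρ₀ 0)) I ρ₀ := by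
    have hvalue : -((κ ρ₀ * ‖x' ρ₀‖) • ν ρ₀) 1 = -(κ ρ₀ * x' ρ₀ 0) := by
      simp only [hν, hτ, smul_neg, PiLp.neg_apply, PiLp.smul_apply, perp_apply_one, smul_eq_mul,
        mul_neg, neg_neg, neg_inj]
      field_simp
    rw [hν0, ← hvalue]
    exact ((hFrenet ρ₀ hρ₀I).piLp_apply 1).neg
  have hνaxis : ν ρ₀ 0 = 0 := by simp [hν, hτ, hcontact]
  convert tendsto_div_of_hasDerivWithinAt_of_eq_zero hνderiv ((hx ρ₀ hρ₀I).piLp_apply 0)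
    hνaxis haxis hx'0 using 2
  field_simp

/-- Let `x : Ī → ℝ²` be a C² curve with `|x_ρ| > 0`, `τ = x_ρ/|x_ρ|`, `ν = −τ^⊥`,
and curvature `κ` satisfying `τ_ρ = κ |x_ρ| ν`.  At a boundary point `ρ₀` of `I` with
`x(ρ₀)·e₁ = 0` and `x_ρ(ρ₀)·e₂ = 0` (the 90° contact-angle condition on the axis of
rotation), and with `x(ρ)·e₁ ≠ 0` for `ρ ≠ ρ₀` near `ρ₀` in `I`, we have
`lim_{ρ→ρ₀} (ν(ρ)·e₁)/(x(ρ)·e₁) = −κ(ρ₀)`. -/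
theorem stmt_4
    (I : Set ℝ) (ρ₀ : ℝ) (hρ₀I : ρ₀ ∈ I) (hρ₀ : ρ₀ ∈ frontier I)
    (x x' τ ν : ℝ → EuclideanSpace ℝ (Fin 2)) (κ : ℝ → ℝ)
    (hx : ∀ ρ ∈ I, HasDerivWithinAt x (x' ρ) I ρ)
    (hpos : ∀ ρ ∈ I, 0 < ‖x' ρ‖)
    (hτ : ∀ ρ, τ ρ = ‖x' ρ‖⁻¹ • x' ρ)
    (hν : ∀ ρ, ν ρ = -perp (τ ρ))
    (hFrenet : ∀ ρ ∈ I, HasDerivWithinAt τ ((κ ρ * ‖x' ρ‖) • ν ρ) I ρ)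
    (haxis : x ρ₀ 0 = 0)
    (hcontact : x' ρ₀ 1 = 0)
    (hne : ∀ᶠ ρ in nhdsWithin ρ₀ (I \ {ρ₀}), x ρ 0 ≠ 0) :
    Tendsto (fun ρ => ν ρ 0 / x ρ 0) (nhdsWithin ρ₀ (I \ {ρ₀}))
      (nhds (-(κ ρ₀))) :=
  stmt_4_general I ρ₀ hρ₀I x x' τ ν κ hx hpos hτ hν hFrenet haxis hcontact
end

section
/- Let Z, η : [0,1] → ℝ² be C¹ with Z(0)·e₁ = Z(1)·e₁ = 0, and define the volume functional V(Z) = −π ∫₀¹ (Z·e₁)² (Z_ρ)^⊥·e₁ dρ. Then the first variation of V at Z in direction η is given by (d/dε) V(Z + ε η) |_{ε=0} = −2π ∫₀¹ (Z·e₁) η·(Z_ρ)^⊥ dρ. -/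
/-!
Expanding `(Z + εη)₀² · (Z' + εη')₁` shows that `ε ↦ V(Z + εη)` is a cubic polynomial in `ε`
whose linear coefficient is `−π ∫ (2 Z₀ η₀ Z'₁ + Z₀² η'₁)`. The term `Z₀² η'₁` is traded for
`−2 Z₀ Z'₀ η₁` by integrating `(Z₀² η₁)'`, whose boundary terms vanish because `Z₀(0) = Z₀(1) = 0`;
what remains is `−2π ∫ Z₀ (η₀ Z'₁ − η₁ Z'₀) = −2π ∫ Z₀ ⟪η, Z'^⊥⟫`.
-/

open Real MeasureTheory

open intervalIntegral Interval

theorem inner_perp (u v : EuclideanSpace ℝ (Fin 2)) :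
    inner ℝ u (perp v) = u 0 * v 1 - u 1 * v 0 := by
  simp only [perp, PiLp.inner_apply, RCLike.inner_apply, ringHom_apply, Fin.sum_univ_two,
    Matrix.cons_val_zero, Matrix.cons_val_one]
  ring

theorem HasDerivAt.euclideanSpace_apply {ι : Type*} [Fintype ι] {f : ℝ → EuclideanSpace ℝ ι}
    {f' : EuclideanSpace ℝ ι} {x : ℝ} (h : HasDerivAt f f' x) (i : ι) :
    HasDerivAt (fun y => f y i) (f' i) x :=
  (EuclideanSpace.proj i : EuclideanSpace ℝ ι →L[ℝ] ℝ).hasFDerivAt.comp_hasDerivAt x h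

section

variable {a b : ℝ}

theorem hasDerivAt_integral_cubic {f₀ f₁ f₂ f₃ : ℝ → ℝ}
    (h₀ : IntervalIntegrable f₀ volume a b) (h₁ : IntervalIntegrable f₁ volume a b)
    (h₂ : IntervalIntegrable f₂ volume a b) (h₃ : IntervalIntegrable f₃ volume a b) :
    HasDerivAt (fun ε => ∫ ρ in a..b, f₀ ρ + ε * f₁ ρ + ε ^ 2 * f₂ ρ + ε ^ 3 * f₃ ρ)
      (∫ ρ in a..b, f₁ ρ) 0 := by
  have hpoly : (fun ε => ∫ ρ in a..b, f₀ ρ + ε * f₁ ρ + ε ^ 2 * f₂ ρ + ε ^ 3 * f₃ ρ) =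
      fun ε => (∫ ρ in a..b, f₀ ρ) + ε * (∫ ρ in a..b, f₁ ρ) + ε ^ 2 * (∫ ρ in a..b, f₂ ρ)
        + ε ^ 3 * (∫ ρ in a..b, f₃ ρ) := by
    funext ε
    rw [integral_add ((h₀.add (h₁.const_mul ε)).add (h₂.const_mul _)) (h₃.const_mul _),
      integral_add (h₀.add (h₁.const_mul ε)) (h₂.const_mul _), integral_add h₀ (h₁.const_mul ε),
      intervalIntegral.integral_const_mul, intervalIntegral.integral_const_mul,
      intervalIntegral.integral_const_mul]
  rw [hpoly]
  have hlin : HasDerivAt (fun ε : ℝ => ε * ∫ ρ in a..b, f₁ ρ) (∫ ρ in a..b, f₁ ρ) 0 := by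
    simpa using (hasDerivAt_id (0 : ℝ)).mul_const (∫ ρ in a..b, f₁ ρ)
  have hsq : HasDerivAt (fun ε : ℝ => ε ^ 2 * ∫ ρ in a..b, f₂ ρ) 0 0 := by
    simpa using (hasDerivAt_pow 2 (0 : ℝ)).mul_const (∫ ρ in a..b, f₂ ρ)
  have hcube : HasDerivAt (fun ε : ℝ => ε ^ 3 * ∫ ρ in a..b, f₃ ρ) 0 0 := by
    simpa using (hasDerivAt_pow 3 (0 : ℝ)).mul_const (∫ ρ in a..b, f₃ ρ)
  simpa using
    (((hasDerivAt_const (0 : ℝ) (∫ ρ in a..b, f₀ ρ)).fun_add hlin).fun_add hsq).fun_add hcube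

theorem hasDerivAt_integral_sq_mul {u v w x : ℝ → ℝ}
    (hu : ContinuousOn u [[a, b]]) (hv : ContinuousOn v [[a, b]])
    (hw : ContinuousOn w [[a, b]]) (hx : ContinuousOn x [[a, b]]) :
    HasDerivAt (fun ε => ∫ ρ in a..b, (u ρ + ε * v ρ) ^ 2 * (w ρ + ε * x ρ))
      (∫ ρ in a..b, 2 * u ρ * v ρ * w ρ + u ρ ^ 2 * x ρ) 0 := by
  have hexpand : ∀ ε ρ, (u ρ + ε * v ρ) ^ 2 * (w ρ + ε * x ρ) =
      u ρ ^ 2 * w ρ + ε * (2 * u ρ * v ρ * w ρ + u ρ ^ 2 * x ρ)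
        + ε ^ 2 * (v ρ ^ 2 * w ρ + 2 * u ρ * v ρ * x ρ) + ε ^ 3 * (v ρ ^ 2 * x ρ) :=
    fun _ _ => by ring
  simp only [hexpand]
  exact hasDerivAt_integral_cubic (ContinuousOn.intervalIntegrable (by fun_prop))
    (ContinuousOn.intervalIntegrable (by fun_prop)) (ContinuousOn.intervalIntegrable (by fun_prop))
    (ContinuousOn.intervalIntegrable (by fun_prop))

theorem integral_deriv_sq_mul_eq_zero {u u' y y' : ℝ → ℝ}
    (hu : ∀ ρ ∈ [[a, b]], HasDerivAt u (u' ρ) ρ) (hy : ∀ ρ ∈ [[a, b]], HasDerivAt y (y' ρ) ρ)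
    (hint : IntervalIntegrable (fun ρ => 2 * u ρ * u' ρ * y ρ + u ρ ^ 2 * y' ρ) volume a b)
    (ha : u a = 0) (hb : u b = 0) :
    ∫ ρ in a..b, 2 * u ρ * u' ρ * y ρ + u ρ ^ 2 * y' ρ = 0 := by
  have hderiv : ∀ ρ ∈ [[a, b]],
      HasDerivAt (fun ρ => u ρ ^ 2 * y ρ) (2 * u ρ * u' ρ * y ρ + u ρ ^ 2 * y' ρ) ρ := fun ρ hρ =>
    (((hu ρ hρ).fun_pow 2).fun_mul (hy ρ hρ)).congr_deriv (by ring)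
  rw [integral_eq_sub_of_hasDerivAt hderiv hint, ha, hb]
  ring

end

theorem stmt_8_general
    (Z Z' η η' : ℝ → EuclideanSpace ℝ (Fin 2))
    (hZ : ∀ ρ ∈ Set.Icc (0:ℝ) 1, HasDerivAt Z (Z' ρ) ρ)
    (hη : ∀ ρ ∈ Set.Icc (0:ℝ) 1, HasDerivAt η (η' ρ) ρ)
    (hcZ' : ContinuousOn Z' (Set.Icc 0 1))
    (hcη' : ContinuousOn η' (Set.Icc 0 1))
    (hbc0 : Z 0 0 = 0) (hbc1 : Z 1 0 = 0) :
    HasDerivAt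
      (fun ε : ℝ => -π * ∫ ρ in (0:ℝ)..1, ((Z ρ + ε • η ρ) 0) ^ 2 * (perp (Z' ρ + ε • η' ρ) 0))
      (-2 * π * ∫ ρ in (0:ℝ)..1, (Z ρ 0) * (inner ℝ (η ρ) (perp (Z' ρ)) : ℝ))
      0 := by
  rw [← Set.uIcc_of_le zero_le_one] at hZ hη hcZ' hcη'
  have hZ₀ ρ hρ := (hZ ρ hρ).euclideanSpace_apply 0
  have hη₁ ρ hρ := (hη ρ hρ).euclideanSpace_apply 1
  have hcZ : ContinuousOn Z [[0, 1]] := HasDerivAt.continuousOn hZ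
  have hcη : ContinuousOn η [[0, 1]] := HasDerivAt.continuousOn hη
  have hV := (hasDerivAt_integral_sq_mul (u := fun ρ => Z ρ 0) (v := fun ρ => η ρ 0)
    (w := fun ρ => Z' ρ 1) (x := fun ρ => η' ρ 1) (by fun_prop) (by fun_prop) (by fun_prop)
    (by fun_prop)).const_mul (-π)
  have hboundary := integral_deriv_sq_mul_eq_zero hZ₀ hη₁
    (ContinuousOn.intervalIntegrable (by fun_prop)) hbc0 hbc1
  have hsplit : ∫ ρ in (0:ℝ)..1, 2 * (Z ρ 0 * inner ℝ (η ρ) (perp (Z' ρ))) =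
      (∫ ρ in (0:ℝ)..1, 2 * Z ρ 0 * η ρ 0 * Z' ρ 1 + Z ρ 0 ^ 2 * η' ρ 1) -
        ∫ ρ in (0:ℝ)..1, 2 * Z ρ 0 * Z' ρ 0 * η ρ 1 + Z ρ 0 ^ 2 * η' ρ 1 := by
    rw [← integral_sub (ContinuousOn.intervalIntegrable (by fun_prop))
      (ContinuousOn.intervalIntegrable (by fun_prop))]
    congr 1 with ρ
    rw [inner_perp]
    ring
  rw [hboundary, sub_zero, intervalIntegral.integral_const_mul] at hsplit
  -- the integrand of `V(Z + εη)` is definitionally `(Z₀ + εη₀)² (Z'₁ + εη'₁)`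
  refine hV.congr_deriv ?_
  rw [← hsplit]
  ring

/-- First variation of the enclosed-volume functional
`V(Z) = −π ∫₀¹ (Z·e₁)² (Z_ρ)^⊥·e₁ dρ`:  for C¹ curves `Z, η : [0,1] → ℝ²` with
`Z(0)·e₁ = Z(1)·e₁ = 0`,
`(d/dε) V(Z + ε η) |_{ε=0} = −2π ∫₀¹ (Z·e₁) η·(Z_ρ)^⊥ dρ`. -/
theorem stmt_8
    (Z Z' η η' : ℝ → EuclideanSpace ℝ (Fin 2))
    (hZ : ∀ ρ ∈ Set.Icc (0:ℝ) 1, HasDerivAt Z (Z' ρ) ρ)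
    (hη : ∀ ρ ∈ Set.Icc (0:ℝ) 1, HasDerivAt η (η' ρ) ρ)
    (hcZ : ContinuousOn Z (Set.Icc 0 1)) (hcZ' : ContinuousOn Z' (Set.Icc 0 1))
    (hcη : ContinuousOn η (Set.Icc 0 1)) (hcη' : ContinuousOn η' (Set.Icc 0 1))
    (hbc0 : Z 0 0 = 0) (hbc1 : Z 1 0 = 0) :
    HasDerivAt
      (fun ε : ℝ => -π * ∫ ρ in (0:ℝ)..1, ((Z ρ + ε • η ρ) 0) ^ 2 * (perp (Z' ρ + ε • η' ρ) 0))
      (-2 * π * ∫ ρ in (0:ℝ)..1, (Z ρ 0) * (inner ℝ (η ρ) (perp (Z' ρ)) : ℝ))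
      0 :=
  stmt_8_general Z Z' η η' hZ hη hcZ' hcη' hbc0 hbc1
end
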